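/- arXiv:2004.06953 — 3 statements merged into one kernel-verified Lean document; each statement's English description precedes it below -/
import Mathlib

section
/- Let β, β_Γ : ℝ → Set ℝ be maximal monotone graphs with 0 ∈ β(0), 0 ∈ β_Γ(0), and suppose D(β_Γ) ⊆ D(β) and there exist constants ϱ ≥ 1 and c₀ > 0 such that |β°(r)| ≤ ϱ |β_Γ°(r)| + c₀ for all r ∈ D(β_Γ). Then for every ε ∈ (0,1] and every r ∈ ℝ, the Yosida approximations satisfy |β_ε(r)| ≤ ϱ |β_{Γ,ε}(r)| + c₀ (with the same constants ϱ and c₀). -/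
/-!
If `|β_ε(r)| ≤ |β_{Γ,ε}(r)|` there is nothing to prove, so assume the opposite. Let
`x = J_Γ r`, so that `β_{Γ,ε}(r) ∈ β_Γ(x)`, and let `b₀ = β°(x)`, which exists because the values
of a maximal monotone graph are closed. Since `J r - x = ε (β_{Γ,ε}(r) - β_ε(r))`, monotonicity of
`β` between `(J r, β_ε(r))` and `(x, b₀)` puts `b₀` beyond `β_ε(r)` on the side away from
`β_{Γ,ε}(r)`, hence `|β_ε(r)| ≤ |β°(x)| ≤ ϱ |β_Γ°(x)| + c₀ ≤ ϱ |β_{Γ,ε}(r)| + c₀`.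
-/

/-- A monotone graph on ℝ. -/
def IsMonotoneGraph (β : ℝ → Set ℝ) : Prop :=
  ∀ ⦃x y u v : ℝ⦄, u ∈ β x → v ∈ β y → 0 ≤ (u - v) * (x - y)

/-- A maximal monotone graph on ℝ. -/
def IsMaximalMonotone (β : ℝ → Set ℝ) : Prop :=
  IsMonotoneGraph β ∧
    ∀ ⦃x u : ℝ⦄, (∀ ⦃y v : ℝ⦄, v ∈ β y → 0 ≤ (u - v) * (x - y)) → u ∈ β x

/-- `J` is the (single-valued) resolvent `(I + ε β)⁻¹`, i.e. for every `r`,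
`J r + ε * v = r` for some `v ∈ β (J r)`; equivalently `(r - J r)/ε ∈ β (J r)`. -/
def IsResolvent (β : ℝ → Set ℝ) (ε : ℝ) (J : ℝ → ℝ) : Prop :=
  ∀ r : ℝ, (r - J r) / ε ∈ β (J r)

/-- `b` is the element of `β r` of minimal absolute value (the minimal section `β°(r)`). -/
def IsMinimalSection (β : ℝ → Set ℝ) (r b : ℝ) : Prop :=
  b ∈ β r ∧ ∀ v ∈ β r, |b| ≤ |v|

section
variable {β : ℝ → Set ℝ}

lemma IsMaximalMonotone.isClosed (hβ : IsMaximalMonotone β) (x : ℝ) : IsClosed (β x) := by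
  have hβx : β x = ⋂ (y : ℝ) (v : ℝ) (_ : v ∈ β y), {u : ℝ | 0 ≤ (u - v) * (x - y)} := by
    ext u
    simp only [Set.mem_iInter, Set.mem_ofPred_eq]
    exact ⟨fun hu _ _ hv => hβ.1 hu hv, fun hu => hβ.2 fun y v hv => hu y v hv⟩
  rw [hβx]
  refine isClosed_iInter fun y => isClosed_iInter fun v => isClosed_iInter fun _ => ?_
  exact isClosed_le continuous_const (by fun_prop)

lemma IsMaximalMonotone.exists_isMinimalSection (hβ : IsMaximalMonotone β) {x : ℝ}
    (hx : (β x).Nonempty) : ∃ b, IsMinimalSection β x b := by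
  obtain ⟨b, hb, hdist⟩ := (hβ.isClosed x).exists_infDist_eq_dist hx 0
  refine ⟨b, hb, fun v hv => ?_⟩
  simpa [hdist, Real.dist_eq] using Metric.infDist_le_dist_of_mem (x := (0 : ℝ)) hv

lemma IsResolvent.sub_mul_sub_nonneg {ε : ℝ} {J : ℝ → ℝ} (hJ : IsResolvent β ε J)
    (hβ : IsMonotoneGraph β) (hε : 0 < ε) {r c v : ℝ} (hv : v ∈ β (r - ε * c)) :
    0 ≤ ((r - J r) / ε - v) * (c - (r - J r) / ε) := by
  have h := hβ (hJ r) hv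
  have hJr : J r - (r - ε * c) = ε * (c - (r - J r) / ε) := by
    field_simp
    ring
  rw [hJr, mul_left_comm] at h
  exact (mul_nonneg_iff_of_pos_left hε).1 h

end

lemma abs_le_abs_of_sub_mul_sub_nonneg {b c d : ℝ} (hcb : |c| < |b|)
    (h : 0 ≤ (b - d) * (c - b)) : |b| ≤ |d| := by
  rcases le_or_gt 0 b with hb | hb
  · rw [abs_of_nonneg hb] at hcb ⊢
    have hcb' : c - b < 0 := by linarith [le_abs_self c]
    linarith [le_abs_self d, nonpos_of_mul_nonneg_left h hcb']
  · rw [abs_of_neg hb] at hcb ⊢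
    have hcb' : 0 < c - b := by linarith [neg_abs_le c]
    linarith [neg_le_abs d, nonneg_of_mul_nonneg_left h hcb']

theorem yosida_domination_general (β βΓ : ℝ → Set ℝ)
    (hβ : IsMaximalMonotone β) (hβΓ : IsMaximalMonotone βΓ)
    (hD : ∀ r : ℝ, (βΓ r).Nonempty → (β r).Nonempty)
    (ϱ c₀ : ℝ) (hϱ : 1 ≤ ϱ) (hc₀ : 0 < c₀)
    (hdom : ∀ r b bΓ : ℝ, IsMinimalSection β r b → IsMinimalSection βΓ r bΓ →
      |b| ≤ ϱ * |bΓ| + c₀) :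
    ∀ ε : ℝ, 0 < ε → ε ≤ 1 → ∀ J JΓ : ℝ → ℝ,
      IsResolvent β ε J → IsResolvent βΓ ε JΓ →
      ∀ r : ℝ, |(r - J r) / ε| ≤ ϱ * |(r - JΓ r) / ε| + c₀ := by
  intro ε hε _ J JΓ hJ hJΓ r
  set b := (r - J r) / ε
  set bΓ := (r - JΓ r) / ε
  have hbΓ : bΓ ∈ βΓ (JΓ r) := hJΓ r
  rcases le_or_gt |b| |bΓ| with hle | hlt
  · nlinarith [abs_nonneg bΓ]
  obtain ⟨b₀, hb₀⟩ := hβ.exists_isMinimalSection (hD _ ⟨bΓ, hbΓ⟩)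
  obtain ⟨bΓ₀, hbΓ₀⟩ := hβΓ.exists_isMinimalSection ⟨bΓ, hbΓ⟩
  have hJΓr : r - ε * bΓ = JΓ r := by rw [mul_div_cancel₀ _ hε.ne', sub_sub_cancel]
  have hmono : 0 ≤ (b - b₀) * (bΓ - b) := hJ.sub_mul_sub_nonneg hβ.1 hε (hJΓr ▸ hb₀.1)
  calc |b| ≤ |b₀| := abs_le_abs_of_sub_mul_sub_nonneg hlt hmono
    _ ≤ ϱ * |bΓ₀| + c₀ := hdom _ _ _ hb₀ hbΓ₀
    _ ≤ ϱ * |bΓ| + c₀ := by gcongr ϱ * ?_ + _; exact hbΓ₀.2 _ hbΓ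

/-- If the minimal section of  is dominated by that of  on , then
the same domination (with the same constants) holds for the Yosida approximations. -/
theorem yosida_domination (β βΓ : ℝ → Set ℝ)
    (hβ : IsMaximalMonotone β) (hβΓ : IsMaximalMonotone βΓ)
    (h0 : (0:ℝ) ∈ β 0) (h0Γ : (0:ℝ) ∈ βΓ 0)
    (hD : ∀ r : ℝ, (βΓ r).Nonempty → (β r).Nonempty)
    (ϱ c₀ : ℝ) (hϱ : 1 ≤ ϱ) (hc₀ : 0 < c₀)
    (hdom : ∀ r b bΓ : ℝ, IsMinimalSection β r b → IsMinimalSection βΓ r bΓ →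
      |b| ≤ ϱ * |bΓ| + c₀) :
    ∀ ε : ℝ, 0 < ε → ε ≤ 1 → ∀ J JΓ : ℝ → ℝ,
      IsResolvent β ε J → IsResolvent βΓ ε JΓ →
      ∀ r : ℝ, |(r - J r) / ε| ≤ ϱ * |(r - JΓ r) / ε| + c₀ :=
  yosida_domination_general β βΓ hβ hβΓ hD ϱ c₀ hϱ hc₀ hdom
end

section
/- Let β, β_Γ : ℝ → Set ℝ be maximal monotone graphs with 0 ∈ β(0), 0 ∈ β_Γ(0), and suppose D(β) = D(β_Γ) and there exist constants ϱ ≥ 1 and c₀ > 0 such that (1/ϱ)|β_Γ°(r)| − c₀ ≤ |β°(r)| ≤ ϱ |β_Γ°(r)| + c₀ for all r ∈ D(β). Then for every ε ∈ (0,1] and r ∈ ℝ, the Yosida approximations satisfy (1/ϱ)|β_{Γ,ε}(r)| − c₀ ≤ |β_ε(r)| ≤ ϱ |β_{Γ,ε}(r)| + c₀. -/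
lemma maxmon_closed {β : ℝ → Set ℝ} (hβ : IsMaximalMonotone β) (s : ℝ) :
    IsClosed (β s) := by
  have hset : β s = ⋂ (y : ℝ), ⋂ (v : ℝ), ⋂ (_ : v ∈ β y), {u : ℝ | 0 ≤ (u - v) * (s - y)} := by
    ext u
    simp only [Set.mem_iInter, Set.mem_setOf_eq]
    constructor
    · intro hu y v hv; exact hβ.1 hu hv
    · intro h; exact hβ.2 (fun y v hv => h y v hv)
  rw [hset]
  refine isClosed_iInter fun y => isClosed_iInter fun v => isClosed_iInter fun _ => ?_
  exact isClosed_le continuous_const (((continuous_id.sub continuous_const).mul continuous_const))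

lemma exists_minimal_section {β : ℝ → Set ℝ} (hβ : IsMaximalMonotone β) {s : ℝ}
    (hne : (β s).Nonempty) : ∃ b, IsMinimalSection β s b := by
  obtain ⟨u₀, hu₀⟩ := hne
  have hK : IsCompact (β s ∩ Set.Icc (-|u₀|) |u₀|) :=
    IsCompact.inter_left isCompact_Icc (maxmon_closed hβ s)
  have hKne : (β s ∩ Set.Icc (-|u₀|) |u₀|).Nonempty :=
    ⟨u₀, hu₀, ⟨neg_abs_le u₀, le_abs_self u₀⟩⟩
  obtain ⟨b, hbK, hbmin⟩ := hK.exists_isMinOn hKne continuous_abs.continuousOn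
  refine ⟨b, hbK.1, fun v hv => ?_⟩
  by_cases h : |v| ≤ |u₀|
  · exact hbmin ⟨hv, abs_le.mp h⟩
  · have h1 : |b| ≤ |u₀| := hbmin ⟨hu₀, ⟨neg_abs_le u₀, le_abs_self u₀⟩⟩
    linarith [not_le.mp h]

lemma one_sided_domination (β βΓ : ℝ → Set ℝ)
    (hβ : IsMaximalMonotone β) (hβΓ : IsMaximalMonotone βΓ)
    (h0 : (0:ℝ) ∈ β 0) (h0Γ : (0:ℝ) ∈ βΓ 0)
    (hD : ∀ r : ℝ, (βΓ r).Nonempty → (β r).Nonempty)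
    (ϱ c₀ : ℝ) (hϱ : 1 ≤ ϱ) (hc₀ : 0 < c₀)
    (hupper : ∀ r b bΓ : ℝ, IsMinimalSection β r b → IsMinimalSection βΓ r bΓ →
      |b| ≤ ϱ * |bΓ| + c₀)
    (ε : ℝ) (hε : 0 < ε) (J JΓ : ℝ → ℝ)
    (hJ : IsResolvent β ε J) (hJΓ : IsResolvent βΓ ε JΓ) (r : ℝ) :
    |(r - J r) / ε| ≤ ϱ * |(r - JΓ r) / ε| + c₀ := by
  have hϱ0 : (0:ℝ) < ϱ := lt_of_lt_of_le one_pos hϱ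
  have ha : (r - J r) / ε ∈ β (J r) := hJ r
  have hg : (r - JΓ r) / ε ∈ βΓ (JΓ r) := hJΓ r
  -- sign facts
  have key1 : 0 ≤ ((r - J r) / ε) * (J r) := by
    have := hβ.1 ha h0; simpa using this
  have key2 : 0 ≤ ((r - JΓ r) / ε) * (JΓ r) := by
    have := hβΓ.1 hg h0Γ; simpa using this
  have h2 : 0 ≤ (r - J r) * J r := by
    have h3 := mul_nonneg hε.le key1
    have h4 : ε * (((r - J r) / ε) * J r) = (r - J r) * J r := by
      field_simp
    linarith [h4 ▸ h3]
  have h2Γ : 0 ≤ (r - JΓ r) * JΓ r := by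
    have h3 := mul_nonneg hε.le key2
    have h4 : ε * (((r - JΓ r) / ε) * JΓ r) = (r - JΓ r) * JΓ r := by
      field_simp
    linarith [h4 ▸ h3]
  rcases le_total 0 r with hr | hr
  · -- r ≥ 0 : J r ∈ [0, r], JΓ r ∈ [0, r]
    have hJr0 : 0 ≤ J r := by nlinarith
    have hJrr : J r ≤ r := by nlinarith
    have hs0 : 0 ≤ JΓ r := by nlinarith
    have hsr : JΓ r ≤ r := by nlinarith
    have ha0 : 0 ≤ (r - J r) / ε := div_nonneg (by linarith) hε.le
    have hg0 : 0 ≤ (r - JΓ r) / ε := div_nonneg (by linarith) hε.le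
    rw [abs_of_nonneg ha0, abs_of_nonneg hg0]
    rcases le_or_gt (JΓ r) (J r) with hcase | hcase
    · have hag : (r - J r) / ε ≤ (r - JΓ r) / ε := by
        gcongr
      nlinarith
    · have hne : (β (JΓ r)).Nonempty := hD _ ⟨_, hg⟩
      obtain ⟨b, hb⟩ := exists_minimal_section hβ hne
      obtain ⟨bΓ, hbΓ⟩ := exists_minimal_section hβΓ ⟨_, hg⟩
      have hdb := hupper (JΓ r) b bΓ hb hbΓ
      have hbΓg : |bΓ| ≤ |(r - JΓ r) / ε| := hbΓ.2 _ hg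
      rw [abs_of_nonneg hg0] at hbΓg
      have hab : (r - J r) / ε ≤ b := by
        have := hβ.1 ha hb.1
        nlinarith
      have hb0 : 0 ≤ b := le_trans ha0 hab
      rw [abs_of_nonneg hb0] at hdb
      nlinarith [mul_le_mul_of_nonneg_left hbΓg hϱ0.le]
  · -- r ≤ 0 : J r ∈ [r, 0], JΓ r ∈ [r, 0]
    have hJr0 : J r ≤ 0 := by nlinarith
    have hJrr : r ≤ J r := by nlinarith
    have hs0 : JΓ r ≤ 0 := by nlinarith
    have hsr : r ≤ JΓ r := by nlinarith
    have ha0 : (r - J r) / ε ≤ 0 := div_nonpos_of_nonpos_of_nonneg (by linarith) hε.le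
    have hg0 : (r - JΓ r) / ε ≤ 0 := div_nonpos_of_nonpos_of_nonneg (by linarith) hε.le
    rw [abs_of_nonpos ha0, abs_of_nonpos hg0]
    rcases le_or_gt (J r) (JΓ r) with hcase | hcase
    · have hag : (r - JΓ r) / ε ≤ (r - J r) / ε := by
        gcongr
      nlinarith
    · have hne : (β (JΓ r)).Nonempty := hD _ ⟨_, hg⟩
      obtain ⟨b, hb⟩ := exists_minimal_section hβ hne
      obtain ⟨bΓ, hbΓ⟩ := exists_minimal_section hβΓ ⟨_, hg⟩
      have hdb := hupper (JΓ r) b bΓ hb hbΓ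
      have hbΓg : |bΓ| ≤ |(r - JΓ r) / ε| := hbΓ.2 _ hg
      rw [abs_of_nonpos hg0] at hbΓg
      have hab : b ≤ (r - J r) / ε := by
        have := hβ.1 ha hb.1
        nlinarith
      have hb0 : b ≤ 0 := le_trans hab ha0
      rw [abs_of_nonpos hb0] at hdb
      nlinarith [mul_le_mul_of_nonneg_left hbΓg hϱ0.le]

/-- Under the two-sided growth condition (A2)', the Yosida approximations satisfy the
same two-sided domination with the same constants. -/
theorem yosida_two_sided_domination (β βΓ : ℝ → Set ℝ)
    (hβ : IsMaximalMonotone β) (hβΓ : IsMaximalMonotone βΓ)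
    (h0 : (0:ℝ) ∈ β 0) (h0Γ : (0:ℝ) ∈ βΓ 0)
    (hD : ∀ r : ℝ, (β r).Nonempty ↔ (βΓ r).Nonempty)
    (ϱ c₀ : ℝ) (hϱ : 1 ≤ ϱ) (hc₀ : 0 < c₀)
    (hdom : ∀ r b bΓ : ℝ, IsMinimalSection β r b → IsMinimalSection βΓ r bΓ →
      (1 / ϱ) * |bΓ| - c₀ ≤ |b| ∧ |b| ≤ ϱ * |bΓ| + c₀) :
    ∀ ε : ℝ, 0 < ε → ε ≤ 1 → ∀ J JΓ : ℝ → ℝ,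
      IsResolvent β ε J → IsResolvent βΓ ε JΓ →
      ∀ r : ℝ, (1 / ϱ) * |(r - JΓ r) / ε| - c₀ ≤ |(r - J r) / ε| ∧
        |(r - J r) / ε| ≤ ϱ * |(r - JΓ r) / ε| + c₀ := by
  intro ε hε hε1 J JΓ hJ hJΓ r
  have hϱ0 : (0:ℝ) < ϱ := lt_of_lt_of_le one_pos hϱ
  have hcan : ϱ * (1 / ϱ) = 1 := mul_one_div_cancel (ne_of_gt hϱ0)
  constructor
  · -- lower bound, via the one-sided lemma applied to (βΓ, β)
    have hswap : ∀ s bΓ b : ℝ, IsMinimalSection βΓ s bΓ → IsMinimalSection β s b →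
        |bΓ| ≤ ϱ * |b| + ϱ * c₀ := by
      intro s bΓ b hbΓ hb
      have h1 := (hdom s b bΓ hb hbΓ).1
      have h2 := mul_le_mul_of_nonneg_left h1 hϱ0.le
      have h3 : ϱ * (1 / ϱ * |bΓ| - c₀) = |bΓ| - ϱ * c₀ := by
        field_simp
      linarith [h3 ▸ h2]
    have := one_sided_domination βΓ β hβΓ hβ h0Γ h0 (fun s hs => (hD s).mp hs)
      ϱ (ϱ * c₀) hϱ (mul_pos hϱ0 hc₀) hswap ε hε JΓ J hJΓ hJ r
    have h3 := mul_le_mul_of_nonneg_left this (le_of_lt (by positivity : (0:ℝ) < 1 / ϱ))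
    have h4 : 1 / ϱ * (ϱ * |(r - J r) / ε| + ϱ * c₀) = |(r - J r) / ε| + c₀ := by
      field_simp
    linarith [h4 ▸ h3]
  · exact one_sided_domination β βΓ hβ hβΓ h0 h0Γ (fun s hs => (hD s).mpr hs)
      ϱ c₀ hϱ hc₀ (fun s b bΓ hb hbΓ => (hdom s b bΓ hb hbΓ).2) ε hε J JΓ hJ hJΓ r
end

section
/- Let β : ℝ → Set ℝ be a maximal monotone graph with 0 ∈ β(0), and let m₀ be an interior point of the effective domain D(β). Then there exist constants δ₀ > 0 and c₁ > 0 such that for all ε ∈ (0,1] and all r ∈ ℝ, β_ε(r)(r − m₀) ≥ δ₀ |β_ε(r)| − c₁. -/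
/-! Compare `v ∈ β s` by monotonicity with `up ∈ β (m₀ + δ)` and `um ∈ β (m₀ - δ)`. If `v ≥ 0`
and `s ≥ m₀ + δ` then `v (s - m₀) ≥ δ v`; if `v ≥ 0` and `s < m₀ + δ` then `v ≤ up`, and `0 ∈ β 0`
gives `v s ≥ 0`, so `v (s - m₀) ≥ -|up| |m₀|` and `δ v ≤ δ |up|`. The case `v < 0` is the mirror
image. For the Yosida approximation `v = (r - J r)/ε ∈ β (J r)` one has
`v (r - m₀) = v (J r - m₀) + (r - J r)²/ε`, so the bound at `J r` transfers to `r` with constants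
independent of `ε`. -/

open scoped Pointwise

namespace IsMonotoneGraph

variable {β : ℝ → Set ℝ}

theorem neg_comp_neg (hβ : IsMonotoneGraph β) : IsMonotoneGraph fun x => -β (-x) := by
  intro x y u v hu hv
  have := hβ (Set.mem_neg.mp hu) (Set.mem_neg.mp hv)
  linarith

theorem mul_sub_ge_of_nonneg (hβ : IsMonotoneGraph β) (h0 : (0 : ℝ) ∈ β 0) {m₀ δ up s v : ℝ}
    (hδ : 0 ≤ δ) (hup : up ∈ β (m₀ + δ)) (hv : v ∈ β s) (hv₀ : 0 ≤ v) :
    δ * v - |up| * (|m₀| + δ) ≤ v * (s - m₀) := by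
  rcases le_or_gt (m₀ + δ) s with hs | hs
  · nlinarith [mul_nonneg hv₀ (sub_nonneg.mpr hs), (by positivity : 0 ≤ |up| * (|m₀| + δ))]
  · have hvs : 0 ≤ v * s := by simpa using hβ hv h0
    have hv_le : v ≤ |up| := by
      by_contra! h
      nlinarith [hβ hv hup, le_abs_self up]
    nlinarith [mul_le_mul_of_nonneg_left (le_abs_self m₀) hv₀,
      mul_le_mul_of_nonneg_right hv_le (abs_nonneg m₀), mul_le_mul_of_nonneg_left hv_le hδ]

theorem mul_sub_ge (hβ : IsMonotoneGraph β) (h0 : (0 : ℝ) ∈ β 0) {m₀ δ up um s v : ℝ}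
    (hδ : 0 ≤ δ) (hup : up ∈ β (m₀ + δ)) (hum : um ∈ β (m₀ - δ)) (hv : v ∈ β s) :
    δ * |v| - (|up| + |um|) * (|m₀| + δ) ≤ v * (s - m₀) := by
  have hC : 0 ≤ |um| * (|m₀| + δ) ∧ 0 ≤ |up| * (|m₀| + δ) := ⟨by positivity, by positivity⟩
  rcases le_or_gt 0 v with hv₀ | hv₀
  · have := hβ.mul_sub_ge_of_nonneg h0 hδ hup hv hv₀
    rw [abs_of_nonneg hv₀]
    linarith
  · have hum' : -um ∈ -β (-(-m₀ + δ)) := by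
      rw [Set.mem_neg, neg_neg]
      convert hum using 2
      ring
    have := hβ.neg_comp_neg.mul_sub_ge_of_nonneg (by simpa using h0) hδ hum'
      (show -v ∈ -β (-(-s)) by simpa using hv) (by linarith)
    rw [abs_neg, abs_neg] at this
    rw [abs_of_neg hv₀]
    linarith

end IsMonotoneGraph

theorem exists_add_sub_mem_of_mem_interior {S : Set ℝ} {x : ℝ} (hx : x ∈ interior S) :
    ∃ δ > 0, x + δ ∈ S ∧ x - δ ∈ S := by
  obtain ⟨ρ, hρ, hball⟩ := Metric.mem_nhds_iff.mp (mem_interior_iff_mem_nhds.mp hx)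
  rw [Real.ball_eq_Ioo] at hball
  exact ⟨ρ / 2, half_pos hρ, hball ⟨by linarith, by linarith⟩, hball ⟨by linarith, by linarith⟩⟩

theorem div_mul_sub_le_div_mul_sub {ε : ℝ} (hε : 0 ≤ ε) (r j m : ℝ) :
    (r - j) / ε * (j - m) ≤ (r - j) / ε * (r - m) := by
  have : (r - j) / ε * (r - m) - (r - j) / ε * (j - m) = (r - j) ^ 2 / ε := by ring
  linarith [div_nonneg (sq_nonneg (r - j)) hε]

/-- Gilardi-Miranville-Schimperna inequality: if m₀ is interior to the domain of β,
then the Yosida approximations satisfy β_ε(r)(r − m₀) ≥ δ₀|β_ε(r)| − c₁ uniformly in ε ∈ (0,1]. -/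
theorem gms_inequality (β : ℝ → Set ℝ) (hβ : IsMaximalMonotone β)
    (h0 : (0:ℝ) ∈ β 0) (m₀ : ℝ)
    (hm₀ : m₀ ∈ interior {r : ℝ | (β r).Nonempty}) :
    ∃ δ₀ > (0:ℝ), ∃ c₁ > (0:ℝ), ∀ ε : ℝ, 0 < ε → ε ≤ 1 →
      ∀ J : ℝ → ℝ, IsResolvent β ε J →
        ∀ r : ℝ, δ₀ * |(r - J r) / ε| - c₁ ≤ ((r - J r) / ε) * (r - m₀) := by
  obtain ⟨δ₀, hδ₀, ⟨up, hup⟩, ⟨um, hum⟩⟩ := exists_add_sub_mem_of_mem_interior hm₀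
  refine ⟨δ₀, hδ₀, (|up| + |um|) * (|m₀| + δ₀) + 1, by positivity, ?_⟩
  intro ε hε _ J hJ r
  have hgraph := hβ.1.mul_sub_ge h0 hδ₀.le hup hum (hJ r)
  linarith [div_mul_sub_le_div_mul_sub hε.le r (J r) m₀]
end
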